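/- arXiv:2002.02236 — 2 statements merged into one kernel-verified Lean document; each statement's English description precedes it below -/
import Mathlib

section
/- Let p ≡ 1 (mod 8) be a prime of the form p = a² + 4b² with a ≡ −1 (mod 4) and b > 0, and let Ω_{2b/a} = {x ∈ ℤ : 0 < x < p/2, x^{(p−1)/4} ≡ 2b/a (mod p)}. Then ∏_{t ∈ Ω_{2b/a}} t² ≡ (−1)^{(p+7)/8} · 2b/a (mod p). -/
open Finset
open scoped Classical

theorem stmt_18 (p : ℕ) [Fact p.Prime] (hp8 : p % 8 = 1)
    (a b : ℤ) (ha4 : a % 4 = 3) (hb : 0 < b) (hab : (p : ℤ) = a ^ 2 + 4 * b ^ 2) :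
    ∏ t ∈ (Finset.Ioo 0 p).filter
        (fun x => 2 * x < p ∧
          (x : ZMod p) ^ ((p - 1) / 4) = 2 * (b : ZMod p) / (a : ZMod p)),
        (t : ZMod p) ^ 2 =
      (-1 : ZMod p) ^ ((p + 7) / 8) * (2 * (b : ZMod p) / (a : ZMod p)) := by
  have hp : p.Prime := Fact.out
  haveI : NeZero p := ⟨hp.pos.ne'⟩
  have hp1 : p ≠ 1 := hp.one_lt.ne'
  obtain ⟨k, hk, hk1⟩ : ∃ k, p = 8 * k + 1 ∧ 1 ≤ k := ⟨p / 8, by omega, by omega⟩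
  set ζ : ZMod p := 2 * (b : ZMod p) / (a : ZMod p) with hζdef
  set m : ℕ := (p - 1) / 4 with hmdef
  set S : Finset ℕ := (Finset.Ioo 0 p).filter
      (fun x => 2 * x < p ∧ (x : ZMod p) ^ m = ζ) with hSdef
  have hm : m = 2 * k := by omega
  have hm0 : 0 < m := by omega
  have hmeven : Even m := ⟨k, by omega⟩
  -- a is nonzero mod p
  have ha0 : (a : ZMod p) ≠ 0 := by
    intro h
    rw [ZMod.intCast_zmod_eq_zero_iff_dvd] at h
    have h1 : a ≠ 0 := by intro h0; omega
    have h2 : (p : ℤ) ≤ |a| := Int.le_of_dvd (abs_pos.mpr h1) ((dvd_abs _ _).mpr h)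
    have h3 : |a| ^ 2 = a ^ 2 := sq_abs a
    have h4 : (1 : ℤ) ≤ b := hb
    have h5 : (2 : ℤ) ≤ (p : ℤ) := by exact_mod_cast hp.two_le
    nlinarith
  -- ζ ^ 2 = -1
  have h0 : (a : ZMod p) ^ 2 + 4 * (b : ZMod p) ^ 2 = 0 := by
    have h0' : ((p : ℤ) : ZMod p) = ((a ^ 2 + 4 * b ^ 2 : ℤ) : ZMod p) := by rw [hab]
    push_cast at h0'
    rw [ZMod.natCast_self] at h0'
    exact h0'.symm
  have hζsq : ζ ^ 2 = -1 := by
    rw [hζdef]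
    field_simp
    linear_combination h0
  have hζ0 : ζ ≠ 0 := by
    intro h
    rw [h] at hζsq
    exact one_ne_zero (α := ZMod p) (by linear_combination hζsq)
  -- a generator of the units
  obtain ⟨g, hg⟩ := IsCyclic.exists_generator (α := (ZMod p)ˣ)
  have hog : orderOf g = 8 * k := by
    rw [orderOf_eq_card_of_forall_mem_zpowers hg, Nat.card_eq_fintype_card, ZMod.card_units]; omega
  set gg : ZMod p := (g : ZMod p) with hggdef
  have hgpow : ∀ n : ℕ, gg ^ n = ((g ^ n : (ZMod p)ˣ) : ZMod p) :=
    fun n => (Units.val_pow_eq_pow_val g n).symm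
  have h8k : gg ^ (8 * k) = 1 := by
    rw [hgpow, ← hog, pow_orderOf_eq_one, Units.val_one]
  have h4kne : gg ^ (4 * k) ≠ 1 := by
    intro h
    have hu : (g : (ZMod p)ˣ) ^ (4 * k) = 1 := Units.ext (by rw [← hgpow, h, Units.val_one])
    have := orderOf_dvd_of_pow_eq_one hu
    rw [hog] at this
    have := Nat.le_of_dvd (by omega) this
    omega
  have h4k : gg ^ (4 * k) = -1 := by
    have h1 : gg ^ (4 * k) * gg ^ (4 * k) = 1 := by
      rw [← pow_add, show 4 * k + 4 * k = 8 * k by ring, h8k]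
    rcases mul_self_eq_one_iff.mp h1 with h | h
    · exact absurd h h4kne
    · exact h
  have hγ2 : (gg ^ (2 * k)) ^ 2 = -1 := by
    rw [← pow_mul, show 2 * k * 2 = 4 * k by ring, h4k]
  -- ζ is an m-th power
  obtain ⟨α, hα⟩ : ∃ α : ZMod p, α ^ m = ζ := by
    have hsplit : (ζ - gg ^ (2 * k)) * (ζ + gg ^ (2 * k)) = 0 := by
      linear_combination hζsq - hγ2
    rcases mul_eq_zero.mp hsplit with h | h
    · exact ⟨gg, by rw [hm]; linear_combination -h⟩
    · refine ⟨gg ^ 3, ?_⟩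
      rw [hm, ← pow_mul, show 3 * (2 * k) = 4 * k + 2 * k by ring, pow_add, h4k]
      linear_combination -h
  -- gg ^ 4 is a primitive m-th root of unity
  have hprimg : IsPrimitiveRoot gg (8 * k) := by
    have h := IsPrimitiveRoot.orderOf g
    rw [hog] at h
    exact IsPrimitiveRoot.coe_units_iff.mpr h
  have hξ : IsPrimitiveRoot (gg ^ 4) m := by
    rw [hm]; exact hprimg.pow (by omega) (by ring)
  -- the full solution set C
  set C : Finset (ZMod p) := (Polynomial.nthRoots m ζ).toFinset with hCdef
  have hCnodup : (Polynomial.nthRoots m ζ).Nodup := hξ.nthRoots_nodup hζ0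
  have hCmem : ∀ x : ZMod p, x ∈ C ↔ x ^ m = ζ := fun x => by
    rw [hCdef, Multiset.mem_toFinset, Polynomial.mem_nthRoots hm0]
  have hCcard : C.card = m := by
    rw [hCdef, Multiset.toFinset_card_of_nodup hCnodup, hξ.card_nthRoots,
      if_pos ⟨α, hα⟩]
  have hCprod : ∏ x ∈ C, x = -ζ := by
    have heq : Polynomial.nthRoots m ζ = (Multiset.range m).map (fun i => (gg ^ 4) ^ i * α) :=
      hξ.nthRoots_eq hα
    have h1 : ∏ x ∈ C, x = (Polynomial.nthRoots m ζ).prod := by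
      rw [hCdef, Finset.prod_eq_multiset_prod]
      congr 1
      rw [Multiset.toFinset_val, Multiset.dedup_eq_self.mpr hCnodup, Multiset.map_id']
    rw [h1, heq]
    have h2 : ((Multiset.range m).map (fun i => (gg ^ 4) ^ i * α)).prod
        = ∏ i ∈ Finset.range m, ((gg ^ 4) ^ i * α) := by
      rw [Finset.prod_eq_multiset_prod]; rfl
    rw [h2, Finset.prod_mul_distrib, Finset.prod_const, Finset.card_range, hα,
      Finset.prod_pow_eq_pow_sum, Finset.sum_range_id]
    have h3 : m * (m - 1) / 2 = k * (2 * k - 1) := by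
      rw [hm, show 2 * k * (2 * k - 1) = k * (2 * k - 1) * 2 by ring]
      exact Nat.mul_div_cancel _ zero_lt_two
    rw [h3, ← pow_mul, show 4 * (k * (2 * k - 1)) = (4 * k) * (2 * k - 1) by ring,
      pow_mul, h4k, Odd.neg_one_pow ⟨k - 1, by omega⟩]
    ring
  -- U and V partition C
  set U : Finset (ZMod p) := S.image (Nat.cast : ℕ → ZMod p) with hUdef
  set V : Finset (ZMod p) := S.image (fun t : ℕ => -(t : ZMod p)) with hVdef
  have hSlt : ∀ t ∈ S, 0 < t ∧ t < p ∧ 2 * t < p ∧ (t : ZMod p) ^ m = ζ := by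
    intro t ht
    rw [hSdef, Finset.mem_filter, Finset.mem_Ioo] at ht
    exact ⟨ht.1.1, ht.1.2, ht.2.1, ht.2.2⟩
  have hinjU : ∀ x ∈ S, ∀ y ∈ S, (x : ZMod p) = (y : ZMod p) → x = y := by
    intro x hx y hy h
    have hx' := (hSlt x hx).2.1
    have hy' := (hSlt y hy).2.1
    have := congrArg ZMod.val h
    rwa [ZMod.val_cast_of_lt hx', ZMod.val_cast_of_lt hy'] at this
  have hinjV : ∀ x ∈ S, ∀ y ∈ S, -(x : ZMod p) = -(y : ZMod p) → x = y := by
    intro x hx y hy h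
    exact hinjU x hx y hy (neg_injective h)
  have hdisj : Disjoint U V := by
    rw [Finset.disjoint_left]
    rintro x hx hx'
    rw [hUdef, Finset.mem_image] at hx
    rw [hVdef, Finset.mem_image] at hx'
    obtain ⟨t, ht, rfl⟩ := hx
    obtain ⟨s, hs, hst⟩ := hx'
    have h1 : ((t + s : ℕ) : ZMod p) = 0 := by push_cast; linear_combination -hst
    rw [ZMod.natCast_eq_zero_iff] at h1
    have ht' := hSlt t ht
    have hs' := hSlt s hs
    rcases Nat.eq_zero_of_dvd_of_lt h1 (by omega) with h
    omega
  have hCUV : C = U ∪ V := by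
    ext x
    rw [Finset.mem_union, hCmem]
    constructor
    · intro hx
      have hx0 : x ≠ 0 := by
        intro h; rw [h, zero_pow hm0.ne'] at hx; exact hζ0 hx.symm
      set v : ℕ := x.val with hvdef
      have hvp : v < p := ZMod.val_lt x
      have hv0 : v ≠ 0 := fun h => hx0 ((ZMod.val_eq_zero x).mp h)
      have hxv : ((v : ℕ) : ZMod p) = x := by
        rw [hvdef, ZMod.natCast_val, ZMod.cast_id]
      rcases lt_or_ge (2 * v) p with hlt | hge
      · left
        rw [hUdef, Finset.mem_image]
        refine ⟨v, ?_, hxv⟩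
        rw [hSdef, Finset.mem_filter, Finset.mem_Ioo]
        exact ⟨⟨by omega, hvp⟩, hlt, by rw [hxv]; exact hx⟩
      · right
        rw [hVdef, Finset.mem_image]
        have h2v : 2 * v ≠ p := by omega
        have hvle : v ≤ p := by omega
        have hwv : (((p - v : ℕ)) : ZMod p) = -x := by
          rw [Nat.cast_sub hvle, ZMod.natCast_self, hxv]; ring
        refine ⟨p - v, ?_, by rw [hwv]; ring⟩
        rw [hSdef, Finset.mem_filter, Finset.mem_Ioo]
        refine ⟨⟨by omega, by omega⟩, by omega, ?_⟩
        rw [hwv, hmeven.neg_pow, hx]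
    · rintro (hx | hx)
      · rw [hUdef, Finset.mem_image] at hx
        obtain ⟨t, ht, rfl⟩ := hx
        exact (hSlt t ht).2.2.2
      · rw [hVdef, Finset.mem_image] at hx
        obtain ⟨t, ht, rfl⟩ := hx
        rw [hmeven.neg_pow]
        exact (hSlt t ht).2.2.2
  -- cardinality
  have hcardU : U.card = S.card := Finset.card_image_of_injOn hinjU
  have hcardV : V.card = S.card := Finset.card_image_of_injOn hinjV
  have hScard : S.card = k := by
    have := Finset.card_union_of_disjoint hdisj
    rw [← hCUV, hCcard, hcardU, hcardV] at this
    omega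
  -- product over C in terms of S
  have hprodU : ∏ x ∈ U, x = ∏ t ∈ S, (t : ZMod p) := Finset.prod_image hinjU
  have hprodV : ∏ x ∈ V, x = (-1 : ZMod p) ^ S.card * ∏ t ∈ S, (t : ZMod p) := by
    rw [hVdef, Finset.prod_image hinjV]
    calc ∏ t ∈ S, -(t : ZMod p)
        = ∏ t ∈ S, ((-1 : ZMod p) * (t : ZMod p)) := Finset.prod_congr rfl (fun t _ => by ring)
      _ = (∏ _t ∈ S, (-1 : ZMod p)) * ∏ t ∈ S, (t : ZMod p) := Finset.prod_mul_distrib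
      _ = (-1 : ZMod p) ^ S.card * ∏ t ∈ S, (t : ZMod p) := by rw [Finset.prod_const]
  have hkey : (-1 : ZMod p) ^ S.card * ∏ t ∈ S, (t : ZMod p) ^ 2 = -ζ := by
    rw [← hCprod, hCUV, Finset.prod_union hdisj, hprodU, hprodV, Finset.prod_pow]
    ring
  -- conclude
  have hpow1 : (-1 : ZMod p) ^ S.card * (-1 : ZMod p) ^ S.card = 1 := by
    rw [← pow_add]
    exact Even.neg_one_pow ⟨S.card, rfl⟩
  have hfin : ∏ t ∈ S, (t : ZMod p) ^ 2 = (-1 : ZMod p) ^ S.card * -ζ := by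
    calc ∏ t ∈ S, (t : ZMod p) ^ 2
        = ((-1 : ZMod p) ^ S.card * (-1 : ZMod p) ^ S.card) * ∏ t ∈ S, (t : ZMod p) ^ 2 := by
          rw [hpow1, one_mul]
      _ = (-1 : ZMod p) ^ S.card *
          ((-1 : ZMod p) ^ S.card * ∏ t ∈ S, (t : ZMod p) ^ 2) := by ring
      _ = (-1 : ZMod p) ^ S.card * -ζ := by rw [hkey]
  rw [hfin, hScard, show (p + 7) / 8 = k + 1 by omega, pow_succ]
  ring
end

section
/- Let p ≡ 1 (mod 8) be a prime of the form p = a² + 4b² with a ≡ −1 (mod 4) and b > 0, and let t ∈ ℤ with p ∤ t. Then ∑_{x=1}^{p−1} ((x⁴ − t²)/p) = −2 + 2a·(t/p). -/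
open Finset
open scoped Classical

section Chars
variable (p : ℕ) [Fact p.Prime]

local notation "χ" => quadraticChar (ZMod p)

lemma hchar2 (hp : p ≠ 2) : ringChar (ZMod p) ≠ 2 := by
  rw [ZMod.ringChar_zmod_n]; exact hp

lemma sum_chi_zero (hp : p ≠ 2) : ∑ z : ZMod p, χ z = 0 :=
  quadraticChar_sum_zero (hchar2 p hp)

lemma sum_chi_erase_one (hp : p ≠ 2) : ∑ w ∈ Finset.univ.erase (1 : ZMod p), χ w = -1 := by
  have h5 := sum_chi_zero p hp
  rw [← Finset.add_sum_erase _ _ (Finset.mem_univ (1 : ZMod p))] at h5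
  simpa using h5

/-- Key quadratic sum: `∑ z χ((z+α)(z+β)) = -1` for `α ≠ β`. -/
lemma lemL1 (hp : p ≠ 2) {α β : ZMod p} (hab : α ≠ β) :
    ∑ z : ZMod p, χ ((z + α) * (z + β)) = -1 := by
  set γ := β - α with hγ
  have hγ0 : γ ≠ 0 := sub_ne_zero.mpr hab.symm
  have h1 : ∑ z : ZMod p, χ ((z + α) * (z + β))
      = ∑ z : ZMod p, χ (z * (z + γ)) := by
    refine Fintype.sum_equiv (Equiv.addRight α) _ _ (fun z => ?_)
    congr 1
    simp only [Equiv.coe_addRight]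
    ring
  rw [h1]
  have h2 : ∀ z : ZMod p, z ≠ 0 → χ (z * (z + γ)) = χ (1 + γ * z⁻¹) := by
    intro z hz
    have : z * (z + γ) = z^2 * (1 + γ * z⁻¹) := by field_simp
    rw [this, map_mul, quadraticChar_sq_one' hz, one_mul]
  rw [← Finset.add_sum_erase _ _ (Finset.mem_univ (0 : ZMod p))]
  have h0 : χ ((0 : ZMod p) * (0 + γ)) = 0 := by simp
  rw [h0, zero_add]
  have h3 : ∑ z ∈ Finset.univ.erase (0 : ZMod p), χ (z * (z + γ))
      = ∑ w ∈ Finset.univ.erase (1 : ZMod p), χ w := by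
    refine Finset.sum_nbij' (fun z => 1 + γ * z⁻¹) (fun w => γ * (w - 1)⁻¹) ?_ ?_ ?_ ?_ ?_
    · intro z hz
      simp only [Finset.mem_erase, Finset.mem_univ, and_true] at hz ⊢
      intro h
      have h' : γ * z⁻¹ = 0 := by linear_combination h
      rcases mul_eq_zero.mp h' with h'' | h''
      · exact hγ0 h''
      · exact hz (inv_eq_zero.mp h'')
    · intro w hw
      simp only [Finset.mem_erase, Finset.mem_univ, and_true] at hw ⊢
      intro h
      rcases mul_eq_zero.mp h with h' | h'
      · exact hγ0 h'
      · have h'' : w - 1 = 0 := inv_eq_zero.mp h'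
        exact hw (by linear_combination h'')
    · intro z hz
      simp only [Finset.mem_erase, Finset.mem_univ, and_true] at hz
      field_simp
      rw [add_sub_cancel_left, div_self hγ0]
    · intro w hw
      simp only [Finset.mem_erase, Finset.mem_univ, and_true] at hw
      have hw1 : w - 1 ≠ 0 := sub_ne_zero.mpr hw
      field_simp
      ring
    · intro z hz
      simp only [Finset.mem_erase, Finset.mem_univ, and_true] at hz
      exact h2 z hz
  rw [h3, sum_chi_erase_one p hp]

noncomputable def phi (D : ZMod p) : ℤ :=
  ∑ x : ZMod p, χ x * χ (x ^ 2 + D)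

lemma phi_zero (hp : p ≠ 2) : phi p 0 = 0 := by
  unfold phi
  have h : ∀ x : ZMod p, χ x * χ (x ^ 2 + 0) = χ x := by
    intro x
    rcases eq_or_ne x 0 with h | h
    · simp [h]
    · rw [add_zero, quadraticChar_sq_one' h, mul_one]
  rw [Finset.sum_congr rfl (fun x _ => h x)]
  exact sum_chi_zero p hp

lemma lemB {m : ZMod p} (hm : m ≠ 0) (D : ZMod p) :
    phi p (D * m ^ 2) = χ m * phi p D := by
  unfold phi
  rw [Finset.mul_sum]
  refine (Fintype.sum_bijective (fun u : ZMod p => m * u) (mulLeft_bijective₀ m hm)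
    _ _ (fun u => ?_)).symm
  have h1 : (m * u) ^ 2 + D * m ^ 2 = m ^ 2 * (u ^ 2 + D) := by ring
  rw [h1, map_mul, map_mul, quadraticChar_sq_one' hm]
  ring

lemma chi_neg_one (hp4 : p % 4 = 1) : χ (-1 : ZMod p) = 1 := by
  have h1 : (-1 : ZMod p) ≠ 0 := by
    simp only [ne_eq, neg_eq_zero]; exact one_ne_zero
  rw [quadraticChar_one_iff_isSquare h1]
  exact ZMod.exists_sq_eq_neg_one_iff.mpr (by omega)

lemma sum_chi_sq : ∑ z : ZMod p, χ (z * z) = (p : ℤ) - 1 := by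
  have h : ∀ z : ZMod p, χ (z * z) = 1 - (if z = (0 : ZMod p) then (1 : ℤ) else 0) := by
    intro z
    rcases eq_or_ne z 0 with h | h
    · simp [h]
    · rw [if_neg h, ← sq, quadraticChar_sq_one' h]; ring
  rw [Finset.sum_congr rfl (fun z _ => h z), Finset.sum_sub_distrib,
    Finset.sum_const, Finset.sum_ite_eq' Finset.univ (0 : ZMod p) (fun _ => (1:ℤ))]
  simp [ZMod.card]

lemma innerSumA (hp : p ≠ 2) (x y : ZMod p) :
    ∑ D : ZMod p, χ (x ^ 2 + D) * χ (y ^ 2 + D)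
      = if x ^ 2 = y ^ 2 then (p : ℤ) - 1 else -1 := by
  split_ifs with hxy
  · rw [← sum_chi_sq p]
    refine Fintype.sum_bijective _ (Equiv.addLeft (x ^ 2)).bijective _ _ (fun D => ?_)
    simp only [Equiv.coe_addLeft]
    rw [← hxy, map_mul]
  · have h : ∀ D : ZMod p, χ (x ^ 2 + D) * χ (y ^ 2 + D) = χ ((D + x ^ 2) * (D + y ^ 2)) := by
      intro D
      rw [map_mul, add_comm (x ^ 2) D, add_comm (y ^ 2) D]
    rw [Finset.sum_congr rfl (fun D _ => h D)]
    exact lemL1 p hp hxy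

lemma lemA (hp : p ≠ 2) (hp4 : p % 4 = 1) :
    ∑ D : ZMod p, (phi p D) ^ 2 = 2 * p * ((p : ℤ) - 1) := by
  have hsq : ∀ D : ZMod p, (phi p D) ^ 2
      = ∑ x : ZMod p, ∑ y : ZMod p, (χ x * χ (x ^ 2 + D)) * (χ y * χ (y ^ 2 + D)) := by
    intro D
    rw [phi, sq, Finset.sum_mul_sum]
  rw [Finset.sum_congr rfl (fun D _ => hsq D), Finset.sum_comm]
  have hswap : ∀ x : ZMod p,
      ∑ D : ZMod p, ∑ y : ZMod p, (χ x * χ (x ^ 2 + D)) * (χ y * χ (y ^ 2 + D))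
        = ∑ y : ZMod p, ∑ D : ZMod p, (χ x * χ (x ^ 2 + D)) * (χ y * χ (y ^ 2 + D)) :=
    fun x => Finset.sum_comm
  rw [Finset.sum_congr rfl (fun x _ => hswap x)]
  have hinner : ∀ x y : ZMod p,
      ∑ D : ZMod p, (χ x * χ (x ^ 2 + D)) * (χ y * χ (y ^ 2 + D))
        = χ x * χ y * (-1) + χ x * χ y * (if x ^ 2 = y ^ 2 then (p : ℤ) else 0) := by
    intro x y
    have h1 : ∀ D : ZMod p, (χ x * χ (x ^ 2 + D)) * (χ y * χ (y ^ 2 + D))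
        = (χ x * χ y) * (χ (x ^ 2 + D) * χ (y ^ 2 + D)) := fun D => by ring
    rw [Finset.sum_congr rfl (fun D _ => h1 D), ← Finset.mul_sum, innerSumA p hp x y]
    split_ifs <;> ring
  rw [Finset.sum_congr rfl (fun x _ =>
    Finset.sum_congr rfl (fun y (_ : y ∈ Finset.univ) => hinner x y))]
  have hsplit : ∀ x : ZMod p,
      ∑ y : ZMod p, (χ x * χ y * (-1) + χ x * χ y * (if x ^ 2 = y ^ 2 then (p : ℤ) else 0))
        = (if x = 0 then 0 else 2 * (p : ℤ)) := by
    intro x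
    rw [Finset.sum_add_distrib]
    have hA1 : ∑ y : ZMod p, χ x * χ y * (-1) = 0 := by
      have h' : ∀ y : ZMod p, χ x * χ y * (-1) = (-(χ x)) * χ y := fun y => by ring
      rw [Finset.sum_congr rfl (fun y _ => h' y), ← Finset.mul_sum, sum_chi_zero p hp, mul_zero]
    rw [hA1, zero_add]
    have hmi : ∀ y : ZMod p, χ x * χ y * (if x ^ 2 = y ^ 2 then (p : ℤ) else 0)
        = if x ^ 2 = y ^ 2 then χ x * χ y * (p : ℤ) else 0 := by
      intro y; split_ifs <;> ring
    rw [Finset.sum_congr rfl (fun y _ => hmi y), ← Finset.sum_filter]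
    rcases eq_or_ne x 0 with hx | hx
    · rw [if_pos hx]
      have hf : Finset.univ.filter (fun y : ZMod p => x ^ 2 = y ^ 2) = {0} := by
        ext y
        simp only [Finset.mem_filter, Finset.mem_univ, true_and, Finset.mem_singleton, hx]
        constructor
        · intro h
          have h' : y ^ 2 = 0 := by rw [← h]; ring
          exact pow_eq_zero_iff (by norm_num) |>.mp h'
        · intro h; rw [h]
      rw [hf, Finset.sum_singleton, hx]
      simp
    · rw [if_neg hx]
      have h2 : (2 : ZMod p) ≠ 0 := Ring.two_ne_zero (hchar2 p hp)
      have hxneg : x ≠ -x := by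
        intro h
        apply hx
        have h' : (2 : ZMod p) * x = 0 := by linear_combination h
        rcases mul_eq_zero.mp h' with h'' | h''
        · exact absurd h'' h2
        · exact h''
      have hf : Finset.univ.filter (fun y : ZMod p => x ^ 2 = y ^ 2) = {x, -x} := by
        ext y
        simp only [Finset.mem_filter, Finset.mem_univ, true_and, Finset.mem_insert,
          Finset.mem_singleton]
        constructor
        · intro h
          have h' : (y - x) * (y + x) = 0 := by linear_combination -h
          rcases mul_eq_zero.mp h' with h'' | h''
          · left; exact sub_eq_zero.mp h''
          · right; linear_combination h''
        · rintro (h | h) <;> rw [h] <;> ring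
      rw [hf, Finset.sum_pair hxneg]
      have hnegx : χ (-x) = χ x := by
        have h' : (-x : ZMod p) = -1 * x := by ring
        rw [h', map_mul, chi_neg_one p hp4, one_mul]
      have hxx : χ x * χ x = 1 := by
        have h' := quadraticChar_sq_one (F := ZMod p) hx
        rwa [sq] at h'
      rw [hnegx]
      rw [show χ x * χ x * (p:ℤ) + χ x * χ x * (p:ℤ) = (χ x * χ x) * (2 * p) by ring, hxx,
        one_mul]
  rw [Finset.sum_congr rfl (fun x _ => hsplit x)]
  have h3 : ∀ x : ZMod p, (if x = 0 then (0:ℤ) else 2 * p)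
      = 2 * (p:ℤ) - (if x = 0 then 2 * (p:ℤ) else 0) := by
    intro x; split_ifs <;> ring
  rw [Finset.sum_congr rfl (fun x _ => h3 x), Finset.sum_sub_distrib, Finset.sum_const,
    Finset.sum_ite_eq' Finset.univ (0 : ZMod p) (fun _ => 2 * (p:ℤ))]
  simp [ZMod.card]
  ring

lemma lem4p (hp : p ≠ 2) (hp4 : p % 4 = 1) {n : ZMod p} (hn : χ n = -1) :
    (phi p 1) ^ 2 + (phi p n) ^ 2 = 4 * p := by
  have hn0 : n ≠ 0 := by
    intro h; rw [h] at hn; simp at hn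
  have key : ∀ D : ZMod p, D ≠ 0 →
      (phi p D) ^ 2 + (phi p (n * D)) ^ 2 = (phi p 1) ^ 2 + (phi p n) ^ 2 := by
    intro D hD
    rcases quadraticChar_dichotomy hD with h1 | h1
    · obtain ⟨r, hr⟩ := (quadraticChar_one_iff_isSquare hD).mp h1
      have hr0 : r ≠ 0 := by rintro rfl; rw [mul_zero] at hr; exact hD hr
      have hD1 : D = 1 * r ^ 2 := by rw [hr]; ring
      have hD2 : n * D = n * r ^ 2 := by rw [hr]; ring
      rw [hD2, lemB p hr0 n, hD1, lemB p hr0 1]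
      have hs : (χ r) ^ 2 = 1 := quadraticChar_sq_one hr0
      linear_combination ((phi p 1) ^ 2 + (phi p n) ^ 2) * hs
    · have hni : χ (n⁻¹) = -1 := by
        have h2 : (n⁻¹ : ZMod p) = n * (n⁻¹) ^ 2 := by field_simp
        rw [h2, map_mul, quadraticChar_sq_one' (inv_ne_zero hn0), mul_one, hn]
      have hprod : χ (n⁻¹ * D) = 1 := by
        rw [map_mul, hni, h1]; ring
      have hnD0 : n⁻¹ * D ≠ 0 := mul_ne_zero (inv_ne_zero hn0) hD
      obtain ⟨r, hr⟩ := (quadraticChar_one_iff_isSquare hnD0).mp hprod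
      have hr0 : r ≠ 0 := by rintro rfl; rw [mul_zero] at hr; exact hnD0 hr
      have hD1 : D = n * r ^ 2 := by
        have h3 : n * (n⁻¹ * D) = n * (r * r) := by rw [hr]
        field_simp at h3
        rw [h3]
      have hD2 : n * D = 1 * (n * r) ^ 2 := by rw [hD1]; ring
      rw [hD2, lemB p (mul_ne_zero hn0 hr0) 1, hD1, lemB p hr0 n]
      have hs : (χ r) ^ 2 = 1 := quadraticChar_sq_one hr0
      have hs2 : (χ (n * r)) ^ 2 = 1 := quadraticChar_sq_one (mul_ne_zero hn0 hr0)
      linear_combination (phi p n) ^ 2 * hs + (phi p 1) ^ 2 * hs2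
  have hre2 : ∑ D ∈ Finset.univ.erase (0 : ZMod p), (phi p (n * D)) ^ 2
      = ∑ D ∈ Finset.univ.erase (0 : ZMod p), (phi p D) ^ 2 := by
    refine Finset.sum_nbij' (fun D => n * D) (fun E => n⁻¹ * E) ?_ ?_ ?_ ?_ ?_
    · intro D hD
      simp only [Finset.mem_erase, Finset.mem_univ, and_true] at hD ⊢
      exact mul_ne_zero hn0 hD
    · intro E hE
      simp only [Finset.mem_erase, Finset.mem_univ, and_true] at hE ⊢
      exact mul_ne_zero (inv_ne_zero hn0) hE
    · intro D hD; field_simp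
    · intro E hE; field_simp
    · intro D hD; rfl
  have hfull : ∑ D ∈ Finset.univ.erase (0 : ZMod p), (phi p D) ^ 2 = 2 * p * ((p : ℤ) - 1) := by
    have h := lemA p hp hp4
    rw [← Finset.add_sum_erase _ _ (Finset.mem_univ (0 : ZMod p)), phi_zero p hp] at h
    simpa using h
  have hsum : ∑ D ∈ Finset.univ.erase (0 : ZMod p),
      ((phi p D) ^ 2 + (phi p (n * D)) ^ 2) = ((p : ℤ) - 1) * ((phi p 1) ^ 2 + (phi p n) ^ 2) := by
    rw [Finset.sum_congr rfl (fun D hD => key D (Finset.mem_erase.mp hD).1),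
      Finset.sum_const, Finset.card_erase_of_mem (Finset.mem_univ _), Finset.card_univ,
      ZMod.card, nsmul_eq_mul]
    have hp2 : 2 ≤ p := (Fact.out : p.Prime).two_le
    push_cast [Nat.cast_sub (by omega : 1 ≤ p)]
    ring
  rw [Finset.sum_add_distrib, hre2, hfull] at hsum
  have hp1 : ((p : ℤ) - 1) ≠ 0 := by
    have hp2 : 2 ≤ p := (Fact.out : p.Prime).two_le
    have h2 : (2 : ℤ) ≤ (p : ℤ) := by exact_mod_cast hp2
    linarith
  apply mul_left_cancel₀ hp1
  rw [← hsum]; ring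

lemma chi_i_one (hp8 : p % 8 = 1) {i : ZMod p} (hi : i ^ 2 = -1) : χ i = 1 := by
  have hi0 : i ≠ 0 := by
    rintro rfl
    rw [zero_pow (by norm_num)] at hi
    exact one_ne_zero (neg_eq_zero.mp hi.symm)
  rw [quadraticChar_one_iff_isSquare hi0, ZMod.euler_criterion p hi0,
    show p / 2 = 4 * (p / 8) by omega, pow_mul]
  have h4 : i ^ 4 = 1 := by
    have h5 : i ^ 4 = (i ^ 2) ^ 2 := by ring
    rw [h5, hi]; ring
  rw [h4, one_pow]

lemma C_eq_phi : ∑ x : ZMod p, χ (x ^ 3 - x) = phi p (-1) := by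
  unfold phi
  refine Finset.sum_congr rfl (fun x _ => ?_)
  rw [show x ^ 3 - x = x * (x ^ 2 + (-1)) by ring, map_mul]

lemma phi_neg_one (hp4 : p % 4 = 1) (hp8 : p % 8 = 1) : phi p (-1) = phi p 1 := by
  obtain ⟨r, hr⟩ := ZMod.exists_sq_eq_neg_one_iff.mpr (by omega : p % 4 ≠ 3)
  have hr2 : r ^ 2 = -1 := by rw [hr]; ring
  have hr0 : r ≠ 0 := by
    rintro rfl
    rw [zero_pow (by norm_num)] at hr2
    exact one_ne_zero (neg_eq_zero.mp hr2.symm)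
  have h1 : (-1 : ZMod p) = 1 * r ^ 2 := by rw [hr2]; ring
  rw [h1, lemB p hr0 1, chi_i_one p hp8 hr2, one_mul]

lemma chi_f_neg (hp4 : p % 4 = 1) (x : ZMod p) : χ ((-x) ^ 3 - (-x)) = χ (x ^ 3 - x) := by
  rw [show (-x) ^ 3 - (-x) = -1 * (x ^ 3 - x) by ring, map_mul, chi_neg_one p hp4, one_mul]

lemma chi_f_inv (hp4 : p % 4 = 1) {x : ZMod p} (hx : x ≠ 0) :
    χ ((x⁻¹) ^ 3 - x⁻¹) = χ (x ^ 3 - x) := by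
  have h1 : (x⁻¹) ^ 3 - x⁻¹ = (-1) * ((x⁻¹) ^ 2) ^ 2 * (x ^ 3 - x) := by
    have hx4 : x ^ 4 ≠ 0 := pow_ne_zero _ hx
    apply mul_left_cancel₀ hx4
    field_simp
    ring_nf
  rw [h1, map_mul, map_mul, chi_neg_one p hp4,
    quadraticChar_sq_one' (pow_ne_zero 2 (inv_ne_zero hx)), one_mul, one_mul]

lemma quad_orbit_sum (hp : p ≠ 2) (hp4 : p % 4 = 1) :
    ∀ N : ℕ, ∀ s : Finset (ZMod p), s.card = N →
    (∀ x ∈ s, x ≠ 0 ∧ x ^ 2 ≠ 1 ∧ x ^ 2 ≠ -1 ∧ -x ∈ s ∧ x⁻¹ ∈ s) →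
    ∃ k : ℤ, ∑ x ∈ s, χ (x ^ 3 - x) = 8 * k + s.card := by
  intro N
  induction N using Nat.strong_induction_on with
  | _ N ih =>
    intro s hcard hcl
    rcases s.eq_empty_or_nonempty with rfl | ⟨x, hx⟩
    · exact ⟨0, by simp⟩
    obtain ⟨hx0, hx1, hxm1, hxn, hxi⟩ := hcl x hx
    have h2 : (2 : ZMod p) ≠ 0 := Ring.two_ne_zero (hchar2 p hp)
    have hi0 : x⁻¹ ≠ 0 := inv_ne_zero hx0
    -- distinctness
    have d1 : x ≠ -x := by
      intro h
      have h' : (2 : ZMod p) * x = 0 := by linear_combination h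
      rcases mul_eq_zero.mp h' with h'' | h''
      exacts [h2 h'', hx0 h'']
    have d2 : x ≠ x⁻¹ := by
      intro h
      apply hx1
      have : x * x = x * x⁻¹ := by rw [← h]
      rw [mul_inv_cancel₀ hx0] at this
      rw [sq]; exact this
    have d3 : x ≠ -x⁻¹ := by
      intro h
      apply hxm1
      have h' : x * x = (-x⁻¹) * x := by rw [← h]
      rw [neg_mul, inv_mul_cancel₀ hx0] at h'
      rw [sq]; rw [h']
    have d4 : -x ≠ x⁻¹ := by
      intro h
      apply hxm1
      have h' : -(x * x) = x⁻¹ * x := by rw [← h]; ring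
      rw [inv_mul_cancel₀ hx0] at h'
      rw [sq]; linear_combination -h'
    have d5 : -x ≠ -x⁻¹ := fun h => d2 (neg_injective h)
    have d6 : x⁻¹ ≠ -x⁻¹ := by
      intro h
      have h' : (2 : ZMod p) * x⁻¹ = 0 := by linear_combination h
      rcases mul_eq_zero.mp h' with h'' | h''
      exacts [h2 h'', hi0 h'']
    set Q : Finset (ZMod p) := {x, -x, x⁻¹, -x⁻¹} with hQ
    have m1 : x ∉ ({-x, x⁻¹, -x⁻¹} : Finset (ZMod p)) := by
      simp only [Finset.mem_insert, Finset.mem_singleton]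
      push_neg
      exact ⟨d1, d2, d3⟩
    have m2 : -x ∉ ({x⁻¹, -x⁻¹} : Finset (ZMod p)) := by
      simp only [Finset.mem_insert, Finset.mem_singleton]
      push_neg
      exact ⟨d4, d5⟩
    have m3 : x⁻¹ ∉ ({-x⁻¹} : Finset (ZMod p)) := by
      simp only [Finset.mem_singleton]
      exact d6
    have hQcard : Q.card = 4 := by
      rw [hQ, Finset.card_insert_of_notMem m1, Finset.card_insert_of_notMem m2,
        Finset.card_insert_of_notMem m3, Finset.card_singleton]
    have hQsub : Q ⊆ s := by
      rw [hQ]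
      intro z hz
      simp only [Finset.mem_insert, Finset.mem_singleton] at hz
      rcases hz with rfl | rfl | rfl | rfl
      · exact hx
      · exact hxn
      · exact hxi
      · exact (hcl x⁻¹ hxi).2.2.2.1
    have hQneg : ∀ z ∈ Q, -z ∈ Q := by
      intro z hz
      simp only [hQ, Finset.mem_insert, Finset.mem_singleton] at hz ⊢
      rcases hz with rfl | rfl | rfl | rfl
      · tauto
      · rw [neg_neg]; tauto
      · tauto
      · rw [neg_neg]; tauto
    have hQinv : ∀ z ∈ Q, z⁻¹ ∈ Q := by
      intro z hz
      simp only [hQ, Finset.mem_insert, Finset.mem_singleton] at hz ⊢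
      rcases hz with rfl | rfl | rfl | rfl
      · tauto
      · rw [inv_neg]; tauto
      · rw [inv_inv]; tauto
      · rw [inv_neg, inv_inv]; tauto
    have hQsum : ∑ z ∈ Q, χ (z ^ 3 - z) = 4 * χ (x ^ 3 - x) := by
      rw [hQ, Finset.sum_insert m1, Finset.sum_insert m2, Finset.sum_insert m3,
        Finset.sum_singleton]
      rw [chi_f_neg p hp4 x, chi_f_inv p hp4 hx0, chi_f_neg p hp4 x⁻¹, chi_f_inv p hp4 hx0]
      ring
    have hfx : χ (x ^ 3 - x) = 1 ∨ χ (x ^ 3 - x) = -1 := by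
      apply quadraticChar_dichotomy
      intro h
      have h' : x * ((x - 1) * (x + 1)) = 0 := by linear_combination h
      rcases mul_eq_zero.mp h' with h'' | h''
      · exact hx0 h''
      rcases mul_eq_zero.mp h'' with h₃ | h₃
      · exact hx1 (by rw [sq]; linear_combination (x + 1) * h₃)
      · exact hx1 (by rw [sq]; linear_combination (x - 1) * h₃)
    have hcard4 : 4 ≤ N := by
      rw [← hcard, ← hQcard]
      exact Finset.card_le_card hQsub
    have hscard : (s \ Q).card = N - 4 := by
      rw [Finset.card_sdiff_of_subset hQsub, hcard, hQcard]
    have hcl' : ∀ y ∈ s \ Q, y ≠ 0 ∧ y ^ 2 ≠ 1 ∧ y ^ 2 ≠ -1 ∧ -y ∈ s \ Q ∧ y⁻¹ ∈ s \ Q := by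
      intro y hy
      rw [Finset.mem_sdiff] at hy
      obtain ⟨hys, hyQ⟩ := hy
      obtain ⟨hy0, hy1, hym1, hyn, hyi⟩ := hcl y hys
      refine ⟨hy0, hy1, hym1, ?_, ?_⟩
      · rw [Finset.mem_sdiff]
        refine ⟨hyn, fun h => hyQ ?_⟩
        have := hQneg _ h
        rwa [neg_neg] at this
      · rw [Finset.mem_sdiff]
        refine ⟨hyi, fun h => hyQ ?_⟩
        have := hQinv _ h
        rwa [inv_inv] at this
    obtain ⟨k, hk⟩ := ih (N - 4) (by omega) (s \ Q) hscard hcl'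
    rw [hscard] at hk
    have hsplit : ∑ z ∈ s, χ (z ^ 3 - z) = ∑ z ∈ s \ Q, χ (z ^ 3 - z) + ∑ z ∈ Q, χ (z ^ 3 - z) :=
      (Finset.sum_sdiff hQsub).symm
    rw [hsplit, hk, hQsum, hcard]
    have hc : ((N - 4 : ℕ) : ℤ) = (N : ℤ) - 4 := by
      omega
    rcases hfx with h | h
    · exact ⟨k, by rw [h, hc]; ring⟩
    · exact ⟨k - 1, by rw [h, hc]; ring⟩

lemma Cmod8 (hp8 : p % 8 = 1) : ∃ k : ℤ, ∑ x : ZMod p, χ (x ^ 3 - x) = 8 * k + 6 := by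
  have hp : p ≠ 2 := by intro h; rw [h] at hp8; omega
  have hp4 : p % 4 = 1 := by omega
  have hp2 : 2 ≤ p := (Fact.out : p.Prime).two_le
  have hpge : 9 ≤ p := by omega
  have h2 : (2 : ZMod p) ≠ 0 := Ring.two_ne_zero (hchar2 p hp)
  obtain ⟨i, hi'⟩ := ZMod.exists_sq_eq_neg_one_iff.mpr (by omega : p % 4 ≠ 3)
  have hi : i ^ 2 = -1 := by rw [hi']; ring
  have hi0 : i ≠ 0 := by
    rintro rfl
    rw [zero_pow (by norm_num)] at hi
    exact one_ne_zero (neg_eq_zero.mp hi.symm)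
  have hone : (1 : ZMod p) ≠ -1 := by
    intro h
    have h' : (2 : ZMod p) = 0 := by linear_combination h
    exact h2 h'
  -- distinctness
  have di1 : i ≠ 1 := by intro h; rw [h] at hi; simp at hi; exact hone hi
  have dim1 : i ≠ -1 := by
    intro h; rw [h] at hi
    have : (1 : ZMod p) = -1 := by linear_combination hi
    exact hone this
  have dii : i ≠ -i := by
    intro h
    have h' : (2 : ZMod p) * i = 0 := by linear_combination h
    rcases mul_eq_zero.mp h' with h'' | h''
    exacts [h2 h'', hi0 h'']
  have dmi1 : -i ≠ 1 := by
    intro h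
    have : i = -1 := by linear_combination -h
    exact dim1 this
  have dmim1 : -i ≠ -1 := by
    intro h
    have : i = 1 := by linear_combination -h
    exact di1 this
  have dmi0 : -i ≠ 0 := neg_ne_zero.mpr hi0
  set T : Finset (ZMod p) := {0, 1, -1, i, -i} with hT
  have m1 : (0 : ZMod p) ∉ ({1, -1, i, -i} : Finset (ZMod p)) := by
    simp only [Finset.mem_insert, Finset.mem_singleton]
    push_neg
    exact ⟨fun h => one_ne_zero h.symm, fun h => one_ne_zero (neg_eq_zero.mp h.symm),
      fun h => hi0 h.symm, fun h => dmi0 h.symm⟩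
  have m2 : (1 : ZMod p) ∉ ({-1, i, -i} : Finset (ZMod p)) := by
    simp only [Finset.mem_insert, Finset.mem_singleton]
    push_neg
    exact ⟨hone, fun h => di1 h.symm, fun h => dmi1 h.symm⟩
  have m3 : (-1 : ZMod p) ∉ ({i, -i} : Finset (ZMod p)) := by
    simp only [Finset.mem_insert, Finset.mem_singleton]
    push_neg
    exact ⟨fun h => dim1 h.symm, fun h => dmim1 h.symm⟩
  have m4 : (i : ZMod p) ∉ ({-i} : Finset (ZMod p)) := by
    simp only [Finset.mem_singleton]
    exact dii
  have hTcard : T.card = 5 := by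
    rw [hT, Finset.card_insert_of_notMem m1, Finset.card_insert_of_notMem m2,
      Finset.card_insert_of_notMem m3, Finset.card_insert_of_notMem m4,
      Finset.card_singleton]
  have hchi2 : χ (2 : ZMod p) = 1 := by
    rw [quadraticChar_one_iff_isSquare h2]
    exact (ZMod.exists_sq_eq_two_iff hp).mpr (Or.inl hp8)
  have hchii : χ i = 1 := chi_i_one p hp8 hi
  have hTsum : ∑ z ∈ T, χ (z ^ 3 - z) = 2 := by
    rw [hT, Finset.sum_insert m1, Finset.sum_insert m2, Finset.sum_insert m3,
      Finset.sum_insert m4, Finset.sum_singleton]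
    have e0 : ((0 : ZMod p) ^ 3 - 0) = 0 := by ring
    have e1 : ((1 : ZMod p) ^ 3 - 1) = 0 := by ring
    have e2 : ((-1 : ZMod p) ^ 3 - (-1)) = 0 := by ring
    have e3 : (i ^ 3 - i) = -1 * (2 * i) := by linear_combination i * hi
    have e4 : ((-i) ^ 3 - (-i)) = 2 * i := by linear_combination (-i) * hi
    rw [e0, e1, e2, e3, e4, map_mul, map_mul]
    rw [chi_neg_one p hp4, hchi2, hchii]
    simp
  have hTneg : ∀ z ∈ T, -z ∈ T := by
    intro z hz
    simp only [hT, Finset.mem_insert, Finset.mem_singleton] at hz ⊢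
    rcases hz with rfl | rfl | rfl | rfl | rfl
    · rw [neg_zero]; exact Or.inl rfl
    · exact Or.inr (Or.inr (Or.inl rfl))
    · rw [neg_neg]; exact Or.inr (Or.inl rfl)
    · exact Or.inr (Or.inr (Or.inr (Or.inr rfl)))
    · rw [neg_neg]; exact Or.inr (Or.inr (Or.inr (Or.inl rfl)))
  have hTinv : ∀ z ∈ T, z⁻¹ ∈ T := by
    intro z hz
    simp only [hT, Finset.mem_insert, Finset.mem_singleton] at hz ⊢
    rcases hz with rfl | rfl | rfl | hz4 | hz5
    · rw [inv_zero]; exact Or.inl rfl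
    · rw [inv_one]; exact Or.inr (Or.inl rfl)
    · rw [inv_neg, inv_one]; exact Or.inr (Or.inr (Or.inl rfl))
    · rw [hz4]
      have hiv : i⁻¹ = -i := by
        apply inv_eq_of_mul_eq_one_right
        linear_combination -hi
      rw [hiv]; exact Or.inr (Or.inr (Or.inr (Or.inr rfl)))
    · rw [hz5]
      have hiv : (-i)⁻¹ = i := by
        rw [inv_neg]
        have hiv2 : i⁻¹ = -i := by
          apply inv_eq_of_mul_eq_one_right
          linear_combination -hi
        rw [hiv2, neg_neg]
      rw [hiv]; exact Or.inr (Or.inr (Or.inr (Or.inl rfl)))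
  have hcl : ∀ x ∈ Finset.univ \ T, x ≠ 0 ∧ x ^ 2 ≠ 1 ∧ x ^ 2 ≠ -1 ∧
      -x ∈ Finset.univ \ T ∧ x⁻¹ ∈ Finset.univ \ T := by
    intro x hx
    rw [Finset.mem_sdiff] at hx
    obtain ⟨-, hxT⟩ := hx
    have hx0 : x ≠ 0 := by
      intro h; apply hxT; rw [h, hT]; simp
    have hx1 : x ^ 2 ≠ 1 := by
      intro h
      have h' : (x - 1) * (x + 1) = 0 := by linear_combination h
      rcases mul_eq_zero.mp h' with h'' | h''
      · apply hxT; rw [hT]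
        have : x = 1 := by linear_combination h''
        rw [this]; simp
      · apply hxT; rw [hT]
        have : x = -1 := by linear_combination h''
        rw [this]; simp
    have hxm1 : x ^ 2 ≠ -1 := by
      intro h
      have h' : (x - i) * (x + i) = 0 := by linear_combination h - hi
      rcases mul_eq_zero.mp h' with h'' | h''
      · apply hxT; rw [hT]
        have : x = i := by linear_combination h''
        rw [this]; simp
      · apply hxT; rw [hT]
        have : x = -i := by linear_combination h''
        rw [this]; simp
    refine ⟨hx0, hx1, hxm1, ?_, ?_⟩
    · rw [Finset.mem_sdiff]
      refine ⟨Finset.mem_univ _, fun h => hxT ?_⟩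
      have := hTneg _ h
      rwa [neg_neg] at this
    · rw [Finset.mem_sdiff]
      refine ⟨Finset.mem_univ _, fun h => hxT ?_⟩
      have := hTinv _ h
      rwa [inv_inv] at this
  have hTsub : T ⊆ Finset.univ := Finset.subset_univ T
  have hcards : (Finset.univ \ T).card = p - 5 := by
    rw [Finset.card_sdiff_of_subset hTsub, Finset.card_univ, ZMod.card, hTcard]
  obtain ⟨k, hk⟩ := quad_orbit_sum p hp hp4 (p - 5) (Finset.univ \ T) hcards hcl
  rw [hcards] at hk
  have hsplit : ∑ z : ZMod p, χ (z ^ 3 - z)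
      = ∑ z ∈ Finset.univ \ T, χ (z ^ 3 - z) + ∑ z ∈ T, χ (z ^ 3 - z) :=
    (Finset.sum_sdiff hTsub).symm
  rw [hsplit, hk, hTsum]
  obtain ⟨m, hm⟩ : ∃ m, p = 8 * m + 9 := ⟨(p - 9) / 8, by omega⟩
  have hc : ((p - 5 : ℕ) : ℤ) = 8 * m + 4 := by omega
  exact ⟨k + m, by rw [hc]; ring⟩

lemma sq_count_sum (hp : p ≠ 2) (G : ZMod p → ℤ) :
    ∑ z : ZMod p, G (z ^ 2) = ∑ y : ZMod p, (χ y + 1) * G y := by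
  rw [← Finset.sum_fiberwise_of_maps_to' (t := Finset.univ)
    (fun z (_ : z ∈ Finset.univ) => Finset.mem_univ ((fun w : ZMod p => w ^ 2) z)) G]
  refine Finset.sum_congr rfl (fun y _ => ?_)
  rw [Finset.sum_const, nsmul_eq_mul]
  congr 1
  have hq := quadraticChar_card_sqrts (hchar2 p hp) y
  have hset : Finset.univ.filter (fun z : ZMod p => z ^ 2 = y)
      = {x : ZMod p | x ^ 2 = y}.toFinset := by
    ext z
    simp [Set.mem_toFinset]
  rw [hset, hq]
end Chars

lemma coprime_of_sq_add_sq {q : ℕ} (hq : q.Prime) {x y : ℤ} (h : (q : ℤ) = x ^ 2 + y ^ 2) :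
    IsCoprime x y := by
  rw [Int.isCoprime_iff_gcd_eq_one]
  set g := Int.gcd x y with hg
  have hgx : (g : ℤ) ∣ x := Int.gcd_dvd_left x y
  have hgy : (g : ℤ) ∣ y := Int.gcd_dvd_right x y
  have hgp : (g : ℤ) ^ 2 ∣ (q : ℤ) := by
    rw [h]
    exact dvd_add (pow_dvd_pow_of_dvd hgx 2) (pow_dvd_pow_of_dvd hgy 2)
  have hgn : g ^ 2 ∣ q := by
    have := Int.natCast_dvd_natCast.mp (by push_cast at hgp ⊢; exact hgp)
    exact this
  have hgq : g ∣ q := dvd_trans (dvd_pow_self g (by norm_num)) hgn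
  rcases (Nat.Prime.eq_one_or_self_of_dvd hq _ hgq) with h1 | h1
  · exact h1
  · exfalso
    rw [h1] at hgn
    have hle : q ^ 2 ≤ q := Nat.le_of_dvd hq.pos hgn
    nlinarith [hq.two_le]

lemma sq_uniq_key {q : ℕ} (hq : q.Prime) {x y u v : ℤ}
    (hxy : (q : ℤ) = x ^ 2 + y ^ 2) (huv : (q : ℤ) = u ^ 2 + v ^ 2)
    (hxodd : x % 2 = 1) (huodd : u % 2 = 1) (hyev : y % 2 = 0) (hvev : v % 2 = 0)
    (hdvd : (q : ℤ) ∣ x * v - y * u) : x = u ∨ x = -u := by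
  obtain ⟨k, hk⟩ := hdvd
  have hq0 : (0 : ℤ) < q := by exact_mod_cast hq.pos
  have hlag : (x * u + y * v) ^ 2 + (x * v - y * u) ^ 2 = (q : ℤ) ^ 2 := by
    have h1 : (x * u + y * v) ^ 2 + (x * v - y * u) ^ 2 = (x ^ 2 + y ^ 2) * (u ^ 2 + v ^ 2) := by
      ring
    rw [h1, ← hxy, ← huv]; ring
  rw [hk] at hlag
  have hk1 : k ^ 2 ≤ 1 := by nlinarith [sq_nonneg (x * u + y * v), sq_nonneg k]
  rcases eq_or_ne k 0 with hk0 | hk0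
  · rw [hk0, mul_zero] at hk
    have hxv : x * v = y * u := by linarith
    have hcxy : IsCoprime x y := coprime_of_sq_add_sq hq hxy
    have hcuv : IsCoprime u v := coprime_of_sq_add_sq hq huv
    have hxdvd : x ∣ u := by
      have h1 : x ∣ y * u := ⟨v, by linarith⟩
      exact hcxy.dvd_of_dvd_mul_left h1
    have hudvd : u ∣ x := by
      have h1 : u ∣ x * v := ⟨y, by linarith [hxv]⟩
      exact hcuv.dvd_of_dvd_mul_right h1
    have habs : x.natAbs = u.natAbs :=
      Nat.dvd_antisymm (Int.natAbs_dvd_natAbs.mpr hxdvd) (Int.natAbs_dvd_natAbs.mpr hudvd)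
    exact Int.natAbs_eq_natAbs_iff.mp habs
  · exfalso
    have hk2 : k ^ 2 = 1 := by
      have h1 : 1 ≤ k ^ 2 := by
        rcases lt_trichotomy k 0 with h | h | h
        · nlinarith
        · exact absurd h hk0
        · nlinarith
      omega
    have hxu : x * u = -(y * v) := by nlinarith [sq_nonneg (x*u + y*v)]
    have hodd : (x * u) % 2 = 1 :=
      Int.odd_iff.mp ((Int.odd_iff.mpr hxodd).mul (Int.odd_iff.mpr huodd))
    have hev : (y * v) % 2 = 0 := Int.even_iff.mp ((Int.even_iff.mpr hyev).mul_right v)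
    omega

lemma sq_add_sq_uniq {q : ℕ} (hq : q.Prime) {x y u v : ℤ}
    (hxy : (q : ℤ) = x ^ 2 + y ^ 2) (huv : (q : ℤ) = u ^ 2 + v ^ 2)
    (hyev : y % 2 = 0) (hvev : v % 2 = 0)
    (hx4 : x % 4 = 3) (hu4 : u % 4 = 3) : x = u := by
  have hxodd : x % 2 = 1 := by omega
  have huodd : u % 2 = 1 := by omega
  have hprime : Prime ((q : ℤ)) := (Nat.prime_iff_prime_int.mp hq)
  have hdvd : (q : ℤ) ∣ (x * v - y * u) * (x * v + y * u) := by
    refine ⟨x ^ 2 - u ^ 2, ?_⟩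
    linear_combination u ^ 2 * hxy - x ^ 2 * huv
  have hres : x = u ∨ x = -u := by
    rcases hprime.2.2 _ _ hdvd with h | h
    · exact sq_uniq_key hq hxy huv hxodd huodd hyev hvev h
    · have h' : (q : ℤ) ∣ x * (-v) - y * u := by
        have h2 : x * (-v) - y * u = -(x * v + y * u) := by ring
        rw [h2]
        exact h.neg_right
      have huv' : (q : ℤ) = u ^ 2 + (-v) ^ 2 := by rw [neg_pow]; simpa using huv
      exact sq_uniq_key hq hxy huv' hxodd huodd hyev (by omega) h'
  rcases hres with h | h
  · exact h
  · omega

/-- The Legendre symbol `(x/p)`. -/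
noncomputable def leg (p : ℕ) (x : ℤ) : ℤ :=
  if (x : ZMod p) = 0 then 0
  else if ∃ y : ZMod p, y ^ 2 = (x : ZMod p) then 1 else -1

lemma leg_eq (p : ℕ) [Fact p.Prime] (x : ℤ) :
    leg p x = quadraticChar (ZMod p) ((x : ZMod p)) := by
  unfold leg
  by_cases h0 : (x : ZMod p) = 0
  · rw [if_pos h0, h0, quadraticChar_zero]
  · rw [if_neg h0]
    have hiff : (∃ y : ZMod p, y ^ 2 = (x : ZMod p)) ↔ IsSquare ((x : ZMod p)) := by
      constructor
      · rintro ⟨y, hy⟩; exact ⟨y, by rw [← hy]; ring⟩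
      · rintro ⟨y, hy⟩; exact ⟨y, by rw [hy]; ring⟩
    by_cases hs : IsSquare ((x : ZMod p))
    · rw [if_pos (hiff.mpr hs), (quadraticChar_one_iff_isSquare h0).mpr hs]
    · rw [if_neg (fun h => hs (hiff.mp h)), quadraticChar_neg_one_iff_not_isSquare.mpr hs]

theorem stmt_19 (p : ℕ) [Fact p.Prime] (hp8 : p % 8 = 1)
    (a b : ℤ) (ha4 : a % 4 = 3) (hb : 0 < b) (hab : (p : ℤ) = a ^ 2 + 4 * b ^ 2)
    (t : ℤ) (ht : ¬ (p : ℤ) ∣ t) :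
    ∑ x ∈ Finset.Icc 1 (p - 1), leg p ((x : ℤ) ^ 4 - t ^ 2) = -2 + 2 * a * leg p t := by
  have hp : p ≠ 2 := by intro h; rw [h] at hp8; omega
  have hp4 : p % 4 = 1 := by omega
  have hp2 : 2 ≤ p := (Fact.out : p.Prime).two_le
  set τ : ZMod p := ((t : ZMod p)) with hτ
  have hτ0 : τ ≠ 0 := by
    rw [hτ, Ne, ZMod.intCast_zmod_eq_zero_iff_dvd]
    exact ht
  set C : ℤ := ∑ u : ZMod p, quadraticChar (ZMod p) (u ^ 3 - u) with hCdef
  -- number theoretic part: C = 2 * a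
  have hCa : C = 2 * a := by
    obtain ⟨k, hC⟩ := Cmod8 p hp8
    obtain ⟨n, hn⟩ := quadraticChar_exists_neg_one (hchar2 p hp)
    have h4p : (phi p 1) ^ 2 + (phi p n) ^ 2 = 4 * p := lem4p p hp hp4 hn
    have hCphi : C = phi p 1 := by rw [hCdef, C_eq_phi p, phi_neg_one p hp4 hp8]
    set c : ℤ := 4 * k + 3 with hcdef
    have hCc : C = 2 * c := by rw [hCdef, hC, hcdef]; ring
    have hD4 : (phi p n) ^ 2 = 4 * ((p : ℤ) - c ^ 2) := by
      have := h4p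
      rw [← hCphi, hCc] at this
      linarith [this]
    have hDev : Even (phi p n) := by
      have h1 : Even ((phi p n) ^ 2) := by
        rw [hD4]; exact ⟨2 * ((p : ℤ) - c ^ 2), by ring⟩
      exact (Int.even_pow.mp h1).1
    obtain ⟨d, hd⟩ := hDev
    have hd2 : phi p n = 2 * d := by rw [hd]; ring
    have hpcd : (p : ℤ) = c ^ 2 + d ^ 2 := by
      rw [hd2] at hD4
      have h1 : 4 * ((p : ℤ) - c ^ 2 - d ^ 2) = 0 := by linarith [hD4]
      linarith
    have hpz8 : ((p : ℕ) : ℤ) % 8 = 1 := by omega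
    have hc8 : c ^ 2 = 8 * (2 * k ^ 2 + 3 * k + 1) + 1 := by rw [hcdef]; ring
    -- d is even
    have hde : ∃ e : ℤ, d = 2 * e := by
      rcases Int.even_or_odd d with ⟨e, he⟩ | ⟨l, hl⟩
      · exact ⟨e, by rw [he]; ring⟩
      · exfalso
        have hd8 : ∃ B : ℤ, d ^ 2 = 8 * B + 1 := by
          rcases Int.even_or_odd l with ⟨m, hm⟩ | ⟨m, hm⟩
          · exact ⟨2 * m ^ 2 + m, by rw [hl, hm]; ring⟩
          · exact ⟨2 * m ^ 2 + 3 * m + 1, by rw [hl, hm]; ring⟩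
        obtain ⟨B, hB⟩ := hd8
        rw [hc8, hB] at hpcd
        omega
    obtain ⟨e, he⟩ := hde
    have hab' : (p : ℤ) = a ^ 2 + (2 * b) ^ 2 := by linear_combination hab
    have hpc : (p : ℤ) = c ^ 2 + (2 * e) ^ 2 := by
      rw [hpcd, he]
      try ring
    have hc4 : c % 4 = 3 := by rw [hcdef]; omega
    have hac : a = c := sq_add_sq_uniq (Fact.out : p.Prime) hab' hpc
      (by omega) (by omega) ha4 hc4
    rw [hCc, hac]
  -- analytic part
  have hleg : ∀ x : ℕ, leg p ((x : ℤ) ^ 4 - t ^ 2)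
      = quadraticChar (ZMod p) ((x : ZMod p) ^ 4 - τ ^ 2) := by
    intro x
    rw [leg_eq]
    congr 1
    push_cast
    rw [hτ]
  have hlegt : leg p t = quadraticChar (ZMod p) τ := by rw [leg_eq, hτ]
  rw [Finset.sum_congr rfl (fun x _ => hleg x)]
  have step2 : ∑ x ∈ Finset.Icc 1 (p - 1), quadraticChar (ZMod p) ((x : ZMod p) ^ 4 - τ ^ 2)
      = ∑ z ∈ Finset.univ.erase (0 : ZMod p), quadraticChar (ZMod p) (z ^ 4 - τ ^ 2) := by
    refine Finset.sum_nbij' (fun x => ((x : ZMod p))) (fun z => z.val) ?_ ?_ ?_ ?_ ?_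
    · intro x hx
      rw [Finset.mem_Icc] at hx
      rw [Finset.mem_erase]
      refine ⟨?_, Finset.mem_univ _⟩
      intro h
      have hdvd := (ZMod.natCast_eq_zero_iff x p).mp h
      have := Nat.le_of_dvd (by omega) hdvd
      omega
    · intro z hz
      rw [Finset.mem_erase] at hz
      rw [Finset.mem_Icc]
      have h1 : z.val < p := ZMod.val_lt z
      have h2 : z.val ≠ 0 := fun h => hz.1 ((ZMod.val_eq_zero z).mp h)
      show 1 ≤ z.val ∧ z.val ≤ p - 1
      omega
    · intro x hx
      rw [Finset.mem_Icc] at hx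
      exact ZMod.val_cast_of_lt (by omega)
    · intro z hz
      exact ZMod.natCast_rightInverse z
    · intro x hx
      rfl
  rw [step2]
  have hzero : quadraticChar (ZMod p) ((0 : ZMod p) ^ 4 - τ ^ 2) = 1 := by
    rw [show ((0 : ZMod p) ^ 4 - τ ^ 2) = -1 * τ ^ 2 by ring, map_mul, chi_neg_one p hp4,
      quadraticChar_sq_one' hτ0, mul_one]
  have step3 : ∑ z ∈ Finset.univ.erase (0 : ZMod p), quadraticChar (ZMod p) (z ^ 4 - τ ^ 2)
      = (∑ z : ZMod p, quadraticChar (ZMod p) (z ^ 4 - τ ^ 2)) - 1 := by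
    rw [Finset.sum_erase_eq_sub (Finset.mem_univ (0 : ZMod p))]
    simp only [hzero]
  rw [step3]
  have step4 : ∑ z : ZMod p, quadraticChar (ZMod p) (z ^ 4 - τ ^ 2)
      = ∑ y : ZMod p, (quadraticChar (ZMod p) y + 1)
          * quadraticChar (ZMod p) (y ^ 2 - τ ^ 2) := by
    have h1 : ∀ z : ZMod p, z ^ 4 - τ ^ 2 = (z ^ 2) ^ 2 - τ ^ 2 := fun z => by ring
    rw [Finset.sum_congr rfl (fun z _ => by rw [h1 z])]
    exact sq_count_sum p hp (fun y => quadraticChar (ZMod p) (y ^ 2 - τ ^ 2))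
  rw [step4]
  have hU : ∑ y : ZMod p, quadraticChar (ZMod p) (y ^ 2 - τ ^ 2) = -1 := by
    have h1 : ∀ y : ZMod p, y ^ 2 - τ ^ 2 = (y + τ) * (y + (-τ)) := fun y => by ring
    rw [Finset.sum_congr rfl (fun y _ => by rw [h1 y])]
    refine lemL1 p hp ?_
    intro h
    have h2 : (2 : ZMod p) ≠ 0 := Ring.two_ne_zero (hchar2 p hp)
    have h' : (2 : ZMod p) * τ = 0 := by linear_combination h
    rcases mul_eq_zero.mp h' with h'' | h''
    · exact h2 h''
    · exact hτ0 h''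
  have hV : ∑ y : ZMod p, quadraticChar (ZMod p) y * quadraticChar (ZMod p) (y ^ 2 - τ ^ 2)
      = quadraticChar (ZMod p) τ * C := by
    have h1 : ∀ y : ZMod p, quadraticChar (ZMod p) y * quadraticChar (ZMod p) (y ^ 2 - τ ^ 2)
        = quadraticChar (ZMod p) (y * (y ^ 2 - τ ^ 2)) := fun y => (map_mul _ _ _).symm
    rw [Finset.sum_congr rfl (fun y _ => h1 y), hCdef, Finset.mul_sum]
    refine (Fintype.sum_bijective (fun u : ZMod p => τ * u) (mulLeft_bijective₀ τ hτ0)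
      _ _ (fun u => ?_)).symm
    rw [show (τ * u) * ((τ * u) ^ 2 - τ ^ 2) = τ ^ 3 * (u ^ 3 - u) by ring, map_mul,
      show (τ : ZMod p) ^ 3 = τ * τ ^ 2 by ring, map_mul, quadraticChar_sq_one' hτ0, mul_one]
  have hdistrib : ∑ y : ZMod p, (quadraticChar (ZMod p) y + 1)
      * quadraticChar (ZMod p) (y ^ 2 - τ ^ 2)
      = (∑ y : ZMod p, quadraticChar (ZMod p) y * quadraticChar (ZMod p) (y ^ 2 - τ ^ 2))
        + ∑ y : ZMod p, quadraticChar (ZMod p) (y ^ 2 - τ ^ 2) := by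
    rw [← Finset.sum_add_distrib]
    exact Finset.sum_congr rfl (fun y _ => by ring)
  rw [hdistrib, hU, hV, hCa, hlegt]
  ring
end
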